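/- arXiv:1808.07661 — 3 statements merged into one kernel-verified Lean document; each statement's English description precedes it below -/
import Mathlib

section
/- Let μ be a Radon measure on ℝⁿ, x ∈ ℝⁿ, r > 0, let L be an affine d-plane, c ≥ 0, and set ℒ := c·H^d|_L. If F_{B(x,r)}(μ,ℒ) < (r/8)·μ(B(x,r/8)), then there is a constant C = C(n,d) > 0 such that C⁻¹·Θ_μ^d(x,r/2) ≤ c ≤ C·Θ_μ^d(x,r). -/
open MeasureTheory Metric Set
open scoped ENNReal NNReal

noncomputable section

/-- `F_B(σ,ν)`: sup over 1-Lipschitz functions supported in `B` of `|∫φ dσ − ∫φ dν|`. -/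
def FB {n : ℕ} (B : Set (EuclideanSpace ℝ (Fin n)))
    (σ ν : Measure (EuclideanSpace ℝ (Fin n))) : ℝ :=
  sSup { t : ℝ | ∃ φ : EuclideanSpace ℝ (Fin n) → ℝ,
    LipschitzWith 1 φ ∧ Function.support φ ⊆ B ∧
    t = |(∫ y, φ y ∂σ) - (∫ y, φ y ∂ν)| }

/-- An affine `d`-plane: a nonempty affine subspace whose direction has dimension `d`. -/
def IsAffineDPlane {n : ℕ} (d : ℕ)
    (L : AffineSubspace ℝ (EuclideanSpace ℝ (Fin n))) : Prop :=
  (L : Set (EuclideanSpace ℝ (Fin n))).Nonempty ∧ Module.finrank ℝ L.direction = d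

/-- The coefficient `α_μ^d(x,r)`. -/
def alphaCoef {n : ℕ} (d : ℕ) (μ : Measure (EuclideanSpace ℝ (Fin n)))
    (x : EuclideanSpace ℝ (Fin n)) (r : ℝ) : ℝ :=
  (1 / (r * (μ (ball x r)).toReal)) *
    sInf { t : ℝ | ∃ (c : ℝ) (L : AffineSubspace ℝ (EuclideanSpace ℝ (Fin n))),
      0 ≤ c ∧ IsAffineDPlane d L ∧
      t = FB (ball x r) μ
        ((ENNReal.ofReal c) • (μH[(d:ℝ)]).restrict (L : Set (EuclideanSpace ℝ (Fin n)))) }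


/-- The density ratio `Θ_μ^d(x,r) = μ(B(x,r))/r^d`. -/
def densityRatio {n : ℕ} (d : ℕ) (μ : Measure (EuclideanSpace ℝ (Fin n)))
    (x : EuclideanSpace ℝ (Fin n)) (r : ℝ) : ℝ :=
  (μ (ball x r)).toReal / r ^ d

/-! Test the hypothesis against the tents `y ↦ (s - |y - z|)⁺`, which are 1-Lipschitz, supported in
`B(z,s)` and at least `s/2` on `B(z,s/2)`; any 1-Lipschitz function supported in `B(z,s)` is
bounded by `2s`, so its integral is at most `2s` times the mass of `B(z,s)`. The tent on `B(x,r/4)`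
has `μ`-integral at least `(r/8) μ(B(x,r/8))`, so `ℒ` cannot vanish near `x` and `L` passes through
some `p ∈ B(x,r/4)`. The tent on `B(x,r)` then gives `μ(B(x,r/2)) ≲ ℒ(B(x,r))`, and the tent on
`B(p,r/2) ⊆ B(x,r)` gives `ℒ(B(p,r/4)) ≲ μ(B(x,r))`. Finally `H^d(B(q,s) ∩ L) = ω s^d` for
`q ∈ L` with `ω = H^d(B^d(0,1))`, since `L` is isometric to `ℝ^d`, and `0 < ω < ∞` because `H^d`
is a Haar measure on `ℝ^d`. -/

section Tent

variable {X : Type*} [PseudoMetricSpace X]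

def tent (z : X) (s : ℝ) (y : X) : ℝ := max (s - dist y z) 0

lemma lipschitzWith_tent (z : X) (s : ℝ) : LipschitzWith 1 (tent z s) :=
  LipschitzWith.of_le_add fun y y' => by
    have h1 := dist_triangle_left y' z y
    have h2 : s - dist y' z ≤ tent z s y' := le_max_left _ _
    refine max_le ?_ (add_nonneg (le_max_right _ _) dist_nonneg)
    linarith

lemma support_tent_subset (z : X) (s : ℝ) : Function.support (tent z s) ⊆ ball z s := by
  intro y hy
  by_contra h
  exact hy (max_eq_right (by simpa using h))

lemma tent_nonneg (z : X) (s : ℝ) (y : X) : 0 ≤ tent z s y := le_max_right _ _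

lemma half_le_tent {z y : X} {s : ℝ} (hy : y ∈ ball z (s / 2)) : s / 2 ≤ tent z s y := by
  have := mem_ball.1 hy
  exact le_max_of_le_left (by linarith)

end Tent

section LipschitzSupportedInBall

variable {E : Type*} [NormedAddCommGroup E] [NormedSpace ℝ E] [Nontrivial E]
  {φ : E → ℝ} {z : E} {s : ℝ}

lemma abs_le_of_support_subset_ball (hφ : LipschitzWith 1 φ)
    (hsupp : Function.support φ ⊆ ball z s) (hs : 0 ≤ s) (y : E) : |φ y| ≤ 2 * s := by
  by_cases hy : φ y = 0
  · rw [hy, abs_zero]; linarith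
  obtain ⟨u, hu⟩ := exists_norm_eq E hs
  have hzu : φ (z + u) = 0 := Function.notMem_support.1 fun h => by
    simpa [hu] using hsupp h
  calc |φ y| = dist (φ y) (φ (z + u)) := by rw [hzu, Real.dist_eq, sub_zero]
    _ ≤ dist y (z + u) := by simpa using hφ.dist_le_mul y (z + u)
    _ ≤ dist y z + dist z (z + u) := dist_triangle _ _ _
    _ ≤ 2 * s := by
      have := mem_ball.1 (hsupp hy)
      rw [dist_self_add_right, hu]
      linarith

variable [MeasurableSpace E] (σ : Measure E)

lemma integrable_of_support_subset_ball [OpensMeasurableSpace E] (hφ : LipschitzWith 1 φ)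
    (hsupp : Function.support φ ⊆ ball z s) (hs : 0 ≤ s) (hσ : σ (ball z s) ≠ ∞) :
    Integrable φ σ :=
  (integrableOn_iff_integrable_of_support_subset hsupp).1 <|
    Measure.integrableOn_of_bounded hσ hφ.continuous.aestronglyMeasurable (M := 2 * s)
      (ae_of_all _ (abs_le_of_support_subset_ball hφ hsupp hs))

lemma abs_integral_le_of_support_subset_ball (hφ : LipschitzWith 1 φ)
    (hsupp : Function.support φ ⊆ ball z s) (hs : 0 ≤ s) (hσ : σ (ball z s) ≠ ∞) :
    |∫ y, φ y ∂σ| ≤ 2 * s * σ.real (ball z s) := by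
  rw [← setIntegral_eq_integral_of_forall_compl_eq_zero
    fun y hy => Function.notMem_support.1 fun h => hy (hsupp h)]
  exact norm_setIntegral_le_of_norm_le_const hσ.lt_top
    fun y _ => (Real.norm_eq_abs _).trans_le (abs_le_of_support_subset_ball hφ hsupp hs y)

lemma mul_measureReal_ball_le_integral_tent [OpensMeasurableSpace E] (hs : 0 ≤ s)
    (hσ : σ (ball z s) ≠ ∞) :
    s / 2 * σ.real (ball z (s / 2)) ≤ ∫ y, tent z s y ∂σ := by
  have hint := integrable_of_support_subset_ball σ (lipschitzWith_tent z s)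
    (support_tent_subset z s) hs hσ
  calc s / 2 * σ.real (ball z (s / 2))
      ≤ ∫ y in ball z (s / 2), tent z s y ∂σ :=
        setIntegral_ge_of_const_le_real measurableSet_ball
          (measure_ne_top_of_subset (ball_subset_ball (by linarith)) hσ)
          (fun y hy => half_le_tent hy) hint.integrableOn
    _ ≤ ∫ y, tent z s y ∂σ := setIntegral_le_integral hint (ae_of_all _ (tent_nonneg z s))

end LipschitzSupportedInBall

section FB

variable {n : ℕ} [NeZero n] {σ ν : Measure (EuclideanSpace ℝ (Fin n))}
  {x : EuclideanSpace ℝ (Fin n)} {r : ℝ}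

lemma abs_integral_sub_le_FB (hr : 0 ≤ r) (hσ : σ (ball x r) ≠ ∞) (hν : ν (ball x r) ≠ ∞)
    {φ : EuclideanSpace ℝ (Fin n) → ℝ} (hφ : LipschitzWith 1 φ)
    (hsupp : Function.support φ ⊆ ball x r) :
    |(∫ y, φ y ∂σ) - (∫ y, φ y ∂ν)| ≤ FB (ball x r) σ ν := by
  refine le_csSup ⟨2 * r * σ.real (ball x r) + 2 * r * ν.real (ball x r), ?_⟩ ⟨φ, hφ, hsupp, rfl⟩
  rintro t ⟨ψ, hψ, hψsupp, rfl⟩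
  exact (abs_sub _ _).trans <| add_le_add
    (abs_integral_le_of_support_subset_ball σ hψ hψsupp hr hσ)
    (abs_integral_le_of_support_subset_ball ν hψ hψsupp hr hν)

lemma measure_ball_quarter_ne_zero_of_FB_lt (hr : 0 < r) (hσ : σ (ball x r) ≠ ∞)
    (hν : ν (ball x r) ≠ ∞) (hFB : FB (ball x r) σ ν < r / 8 * σ.real (ball x (r / 8))) :
    ν (ball x (r / 4)) ≠ 0 := by
  have hsub : ball x (r / 4) ⊆ ball x r := ball_subset_ball (by linarith)
  have hσ_tent : r / 8 * σ.real (ball x (r / 8)) ≤ ∫ y, tent x (r / 4) y ∂σ := by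
    have := mul_measureReal_ball_le_integral_tent σ (z := x) (s := r / 4) (by positivity)
      (measure_ne_top_of_subset hsub hσ)
    rwa [show r / 4 / 2 = r / 8 by ring] at this
  have hclose := (abs_integral_sub_le_FB hr.le hσ hν (lipschitzWith_tent x (r / 4))
    ((support_tent_subset x (r / 4)).trans hsub)).trans_lt hFB
  intro h0
  have hν_tent := abs_integral_le_of_support_subset_ball ν (lipschitzWith_tent x (r / 4))
    (support_tent_subset x (r / 4)) (by positivity) (measure_ne_top_of_subset hsub hν)
  rw [measureReal_def, h0, ENNReal.toReal_zero, mul_zero] at hν_tent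
  linarith [abs_le.1 hν_tent, abs_lt.1 hclose]

lemma measureReal_ball_half_le_of_FB_lt (hr : 0 < r) (hσ : σ (ball x r) ≠ ∞)
    (hν : ν (ball x r) ≠ ∞) (hFB : FB (ball x r) σ ν < r / 8 * σ.real (ball x (r / 8))) :
    3 / 16 * σ.real (ball x (r / 2)) ≤ ν.real (ball x r) := by
  have hσ_tent := mul_measureReal_ball_le_integral_tent σ (z := x) hr.le hσ
  have hν_tent := abs_integral_le_of_support_subset_ball ν (lipschitzWith_tent x r)
    (support_tent_subset x r) hr.le hν
  have hclose := (abs_integral_sub_le_FB hr.le hσ hν (lipschitzWith_tent x r)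
    (support_tent_subset x r)).trans_lt hFB
  have hmono : r / 8 * σ.real (ball x (r / 8)) ≤ r / 8 * σ.real (ball x (r / 2)) :=
    mul_le_mul_of_nonneg_left (measureReal_mono (ball_subset_ball (by linarith))
      (measure_ne_top_of_subset (ball_subset_ball (by linarith)) hσ)) (by positivity)
  have key : r * (3 / 8 * σ.real (ball x (r / 2))) ≤ r * (2 * ν.real (ball x r)) := by
    linarith [abs_le.1 hν_tent, abs_lt.1 hclose]
  linarith [le_of_mul_le_mul_left key hr]

lemma measureReal_ball_quarter_le_of_FB_lt (hr : 0 < r) (hσ : σ (ball x r) ≠ ∞)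
    (hν : ν (ball x r) ≠ ∞) (hFB : FB (ball x r) σ ν < r / 8 * σ.real (ball x (r / 8)))
    {p : EuclideanSpace ℝ (Fin n)} (hp : p ∈ ball x (r / 4)) :
    ν.real (ball p (r / 4)) ≤ 9 / 2 * σ.real (ball x r) := by
  have hsub : ball p (r / 2) ⊆ ball x r := by
    intro y hy
    rw [mem_ball] at hp hy ⊢
    linarith [dist_triangle y p x]
  have hν_tent := mul_measureReal_ball_le_integral_tent ν (z := p) (s := r / 2) (by positivity)
    (measure_ne_top_of_subset hsub hν)
  have hσ_tent := abs_integral_le_of_support_subset_ball σ (lipschitzWith_tent p (r / 2))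
    (support_tent_subset p (r / 2)) (by positivity) (measure_ne_top_of_subset hsub hσ)
  have hclose := (abs_integral_sub_le_FB hr.le hσ hν (lipschitzWith_tent p (r / 2))
    ((support_tent_subset p (r / 2)).trans hsub)).trans_lt hFB
  have hmono₁ : r * σ.real (ball p (r / 2)) ≤ r * σ.real (ball x r) :=
    mul_le_mul_of_nonneg_left (measureReal_mono hsub hσ) hr.le
  have hmono₂ : r / 8 * σ.real (ball x (r / 8)) ≤ r / 8 * σ.real (ball x r) :=
    mul_le_mul_of_nonneg_left (measureReal_mono (ball_subset_ball (by linarith)) hσ) (by positivity)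
  rw [show r / 2 / 2 = r / 4 by ring] at hν_tent
  have key : r * (ν.real (ball p (r / 4)) / 4) ≤ r * (9 / 8 * σ.real (ball x r)) := by
    linarith [abs_le.1 hσ_tent, abs_lt.1 hclose]
  linarith [le_of_mul_le_mul_left key hr]

end FB

section AffinePlane

variable {E : Type*} [NormedAddCommGroup E] [InnerProductSpace ℝ E] [FiniteDimensional ℝ E]
  {d : ℕ} {L : AffineSubspace ℝ E}

lemma AffineSubspace.exists_isometry_range_eq (hL : Module.finrank ℝ L.direction = d) {p : E}
    (hp : p ∈ L) :
    ∃ f : EuclideanSpace ℝ (Fin d) → E, Isometry f ∧ range f = L ∧ f 0 = p := by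
  let e : EuclideanSpace ℝ (Fin d) ≃ₗᵢ[ℝ] L.direction :=
    ((stdOrthonormalBasis ℝ L.direction).reindex (finCongr hL)).repr.symm
  refine ⟨fun v => (e v : E) +ᵥ p, ?_, ?_, by simp⟩
  · exact (IsometryEquiv.vaddConst p).isometry.comp (isometry_subtype_coe.comp e.isometry)
  · ext z
    constructor
    · rintro ⟨v, rfl⟩
      exact AffineSubspace.vadd_mem_of_mem_direction (e v).2 hp
    · intro hz
      refine ⟨e.symm ⟨z -ᵥ p, AffineSubspace.vsub_mem_direction hz hp⟩, ?_⟩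
      simp

def unitBallHausdorffMeasure (d : ℕ) : ℝ :=
  μH[d].real (ball (0 : EuclideanSpace ℝ (Fin d)) 1)

lemma unitBallHausdorffMeasure_pos (d : ℕ) : 0 < unitBallHausdorffMeasure d :=
  ENNReal.toReal_pos (measure_ball_pos _ _ one_pos).ne' measure_ball_lt_top.ne

variable [MeasurableSpace E] [BorelSpace E]

lemma hausdorffMeasure_ball_inter_affineSubspace (hL : Module.finrank ℝ L.direction = d) {p : E}
    (hp : p ∈ L) {s : ℝ} (hs : 0 < s) :
    μH[d] (ball p s ∩ L) = ENNReal.ofReal (unitBallHausdorffMeasure d * s ^ d) := by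
  obtain ⟨f, hf, hrange, hf0⟩ := L.exists_isometry_range_eq hL hp
  rw [← hrange, ← hf.hausdorffMeasure_preimage (Or.inl (Nat.cast_nonneg d)), ← hf0,
    hf.preimage_ball, Measure.addHaar_ball_of_pos _ _ hs, finrank_euclideanSpace_fin, mul_comm,
    ENNReal.ofReal_mul (unitBallHausdorffMeasure_pos d).le, unitBallHausdorffMeasure,
    ofReal_measureReal measure_ball_lt_top.ne]

lemma hausdorffMeasure_ball_inter_affineSubspace_le (hL : Module.finrank ℝ L.direction = d)
    (z : E) {s : ℝ} (hs : 0 < s) :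
    μH[d] (ball z s ∩ L) ≤ ENNReal.ofReal (unitBallHausdorffMeasure d * (2 * s) ^ d) := by
  rcases (ball z s ∩ (L : Set E)).eq_empty_or_nonempty with h | ⟨q, hqz, hqL⟩
  · simp [h]
  rw [← hausdorffMeasure_ball_inter_affineSubspace hL hqL (by positivity)]
  refine measure_mono (inter_subset_inter_left _ fun y hy => ?_)
  rw [mem_ball] at hy hqz ⊢
  linarith [dist_triangle_right y q z]

lemma smul_restrict_hausdorffMeasure_ball_le (hL : Module.finrank ℝ L.direction = d) {c : ℝ}
    (hc : 0 ≤ c) (z : E) {s : ℝ} (hs : 0 < s) :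
    (ENNReal.ofReal c • μH[d].restrict (L : Set E)) (ball z s) ≤
      ENNReal.ofReal (c * unitBallHausdorffMeasure d * (2 * s) ^ d) := by
  rw [Measure.smul_apply, Measure.restrict_apply measurableSet_ball, smul_eq_mul, mul_assoc,
    ENNReal.ofReal_mul hc]
  gcongr
  exact hausdorffMeasure_ball_inter_affineSubspace_le hL z hs

lemma smul_restrict_hausdorffMeasure_real_ball (hL : Module.finrank ℝ L.direction = d) {c : ℝ}
    (hc : 0 ≤ c) {p : E} (hp : p ∈ L) {s : ℝ} (hs : 0 < s) :
    (ENNReal.ofReal c • μH[d].restrict (L : Set E)).real (ball p s) =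
      c * unitBallHausdorffMeasure d * s ^ d := by
  rw [measureReal_def, Measure.smul_apply, Measure.restrict_apply measurableSet_ball, smul_eq_mul,
    hausdorffMeasure_ball_inter_affineSubspace hL hp hs, ← ENNReal.ofReal_mul hc, mul_assoc,
    ENNReal.toReal_ofReal (by have := unitBallHausdorffMeasure_pos d; positivity)]

end AffinePlane

section DensityRatio

variable {n d : ℕ} {μ : Measure (EuclideanSpace ℝ (Fin n))} {x : EuclideanSpace ℝ (Fin n)}
  {r A B : ℝ}

lemma densityRatio_half_le (hr : 0 < r) (h : B * μ.real (ball x (r / 2)) ≤ A * (2 * r) ^ d) :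
    B * densityRatio d μ x (r / 2) ≤ 4 ^ d * A := by
  rw [densityRatio, mul_div_assoc', div_le_iff₀ (by positivity)]
  calc B * (μ (ball x (r / 2))).toReal ≤ A * (2 * r) ^ d := h
    _ = 4 ^ d * A * (r / 2) ^ d := by rw [show 2 * r = 4 * (r / 2) by ring, mul_pow]; ring

lemma le_densityRatio (hr : 0 < r) (h : A * (r / 4) ^ d ≤ B * μ.real (ball x r)) :
    A ≤ 4 ^ d * B * densityRatio d μ x r := by
  rw [densityRatio, mul_div_assoc', le_div_iff₀ (by positivity)]
  calc A * r ^ d = A * (r / 4) ^ d * 4 ^ d := by rw [div_pow]; field_simp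
    _ ≤ B * μ.real (ball x r) * 4 ^ d := by gcongr
    _ = 4 ^ d * B * (μ (ball x r)).toReal := by rw [measureReal_def]; ring

end DensityRatio

/-- If `F_{B(x,r)}(μ, c·H^d|_L) < (r/8)·μ(B(x,r/8))`, then
`Θ_μ^d(x,r/2) ≲ c ≲ Θ_μ^d(x,r)` with a constant depending only on `n` and `d`. -/
theorem statement4 (n d : ℕ) (hd : 1 ≤ d) (hdn : d ≤ n) :
    ∃ C : ℝ, 0 < C ∧
      ∀ (μ : Measure (EuclideanSpace ℝ (Fin n))) [IsLocallyFiniteMeasure μ]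
        (x : EuclideanSpace ℝ (Fin n)) (r : ℝ), 0 < r →
        ∀ (L : AffineSubspace ℝ (EuclideanSpace ℝ (Fin n))), IsAffineDPlane d L →
        ∀ c : ℝ, 0 ≤ c →
        FB (ball x r) μ
            ((ENNReal.ofReal c) • (μH[(d:ℝ)]).restrict (L : Set (EuclideanSpace ℝ (Fin n))))
          < (r / 8) * (μ (ball x (r / 8))).toReal →
        C⁻¹ * densityRatio d μ x (r / 2) ≤ c ∧ c ≤ C * densityRatio d μ x r := by
  set ω := unitBallHausdorffMeasure d
  have hω : 0 < ω := unitBallHausdorffMeasure_pos d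
  refine ⟨max (16 / 3 * 4 ^ d * ω) (9 / 2 * 4 ^ d / ω), by positivity, ?_⟩
  intro μ _ x r hr L hL c hc hFB
  have : NeZero n := ⟨by omega⟩
  set ν := ENNReal.ofReal c • μH[d].restrict (L : Set (EuclideanSpace ℝ (Fin n)))
  have hμ : μ (ball x r) ≠ ∞ := measure_ball_lt_top.ne
  have hνx := smul_restrict_hausdorffMeasure_ball_le hL.2 hc x hr
  have hν : ν (ball x r) ≠ ∞ := ne_top_of_le_ne_top ENNReal.ofReal_ne_top hνx
  obtain ⟨p, hpx, hpL⟩ : (ball x (r / 4) ∩ L).Nonempty := by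
    refine nonempty_iff_ne_empty.2 fun h => measure_ball_quarter_ne_zero_of_FB_lt hr hμ hν hFB ?_
    simp [ν, Measure.restrict_apply measurableSet_ball, h]
  have hlower : 3 / 16 * densityRatio d μ x (r / 2) ≤ 4 ^ d * (c * ω) :=
    densityRatio_half_le hr <| (measureReal_ball_half_le_of_FB_lt hr hμ hν hFB).trans
      (ENNReal.toReal_le_of_le_ofReal (by positivity) hνx)
  have hupper : c * ω ≤ 4 ^ d * (9 / 2) * densityRatio d μ x r := le_densityRatio hr <|
    (smul_restrict_hausdorffMeasure_real_ball hL.2 hc hpL (by positivity)).symm.trans_le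
      (measureReal_ball_quarter_le_of_FB_lt hr hμ hν hFB hpx)
  have hΘ : 0 ≤ densityRatio d μ x r := by unfold densityRatio; positivity
  constructor
  · rw [inv_mul_le_iff₀ (by positivity)]
    calc densityRatio d μ x (r / 2) ≤ 16 / 3 * 4 ^ d * ω * c := by linarith
      _ ≤ _ := by gcongr; exact le_max_left _ _
  · calc c ≤ 9 / 2 * 4 ^ d / ω * densityRatio d μ x r := by
          rw [div_mul_eq_mul_div, le_div_iff₀ hω]; linarith
      _ ≤ _ := by gcongr; exact le_max_right _ _
end
end

section
/- Let μ be a Radon measure on ℝⁿ, x ∈ ℝⁿ, r > 0, c ≥ 0, and let L be an affine d-plane with dist(x,L) ≤ 2r. Then (1/r^d)·∫_{B(x,r)} (dist(y,L)/r) dμ(y) ≤ C(n,d)·F_{B(x,2r)}(μ, c·H^d|_L)/r^{d+1}. In particular, the β-number β_{μ,1}^d(x,r) := inf_{L'} (1/r^d)∫_{B(x,r)} (dist(y,L')/r) dμ(y), where the infimum is over affine d-planes L', satisfies β_{μ,1}^d(x,r) ≤ C(n,d)·F_{B(x,2r)}(μ, c·H^d|_L)/r^{d+1}. -/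
open MeasureTheory Metric Set
open scoped ENNReal NNReal

noncomputable section

/-- The Jones coefficient `β_{μ,1}^d(x,r)`. -/
def betaCoef {n : ℕ} (d : ℕ) (μ : Measure (EuclideanSpace ℝ (Fin n)))
    (x : EuclideanSpace ℝ (Fin n)) (r : ℝ) : ℝ :=
  sInf { t : ℝ | ∃ L' : AffineSubspace ℝ (EuclideanSpace ℝ (Fin n)),
    IsAffineDPlane d L' ∧
    t = (1 / r ^ d) *
      ∫ y in ball x r, infDist y (L' : Set (EuclideanSpace ℝ (Fin n))) / r ∂μ }

/-!
Test `F` against `φ = min (dist(·, L), dist(·, B(x, 2r)ᶜ))`. It is 1-Lipschitz, supported in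
`B(x, 2r)` and vanishes on `L`, so `∫ φ d(c H^d|_L) = 0` and
`∫ φ dμ ≤ F_{B(x,2r)}(μ, c H^d|_L)`; the supremum defining `F` is finite because `H^d` is
locally finite on the `d`-plane `L`.
On `B(x, r)` we have `dist(y, L) ≤ 3r` (as `dist(x, L) ≤ 2r`) and `dist(y, B(x, 2r)ᶜ) ≥ r`,
hence `dist(·, L) ≤ 3φ` there, which gives the bound with `C = 3`.
-/

section DistCutoff

variable {X : Type*} [PseudoMetricSpace X] {S U : Set X}

def distCutoff (S U : Set X) (y : X) : ℝ :=
  min (infDist y S) (infDist y Uᶜ)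

theorem distCutoff_nonneg (y : X) : 0 ≤ distCutoff S U y :=
  le_min infDist_nonneg infDist_nonneg

theorem lipschitzWith_distCutoff : LipschitzWith 1 (distCutoff S U) := by
  unfold distCutoff
  simpa using (lipschitz_infDist_pt S).min (lipschitz_infDist_pt Uᶜ)

theorem distCutoff_eq_zero_of_mem {y : X} (hy : y ∈ S) : distCutoff S U y = 0 := by
  simp [distCutoff, infDist_zero_of_mem hy, infDist_nonneg]

theorem support_distCutoff_subset : Function.support (distCutoff S U) ⊆ U := fun y hy => by
  by_contra hyU
  exact hy (by simp [distCutoff, infDist_zero_of_mem (mem_compl hyU), infDist_nonneg])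

end DistCutoff

section NormedSpace

variable {E : Type*} [NormedAddCommGroup E] [NormedSpace ℝ E]

theorem AffineSubspace.hausdorffMeasure_inter_lt_top [MeasurableSpace E] [BorelSpace E]
    (L : AffineSubspace ℝ E) [FiniteDimensional ℝ L.direction] {s : Set E}
    (hs : Bornology.IsBounded s) :
    μH[(Module.finrank ℝ L.direction : ℝ)] (s ∩ L) < ∞ := by
  rcases (L : Set E).eq_empty_or_nonempty with hL | ⟨p, hp⟩
  · simp [hL]
  let f : L.direction → E := fun v => (v : E) + p
  have hf : Isometry f := Isometry.of_dist_eq fun v w => by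
    simp [f, dist_add_right, Subtype.dist_eq]
  have hsub : s ∩ L ⊆ f '' (f ⁻¹' s) := by
    rintro y ⟨hys, hyL⟩
    refine ⟨⟨y - p, by simpa using L.vsub_mem_direction hyL hp⟩, ?_, by simp [f]⟩
    simpa [f] using hys
  calc μH[(Module.finrank ℝ L.direction : ℝ)] (s ∩ L)
      ≤ μH[(Module.finrank ℝ L.direction : ℝ)] (f '' (f ⁻¹' s)) := measure_mono hsub
    _ = μH[(Module.finrank ℝ L.direction : ℝ)] (f ⁻¹' s) :=
        hf.hausdorffMeasure_image (Or.inl (Nat.cast_nonneg _)) _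
    _ < ∞ := (hf.antilipschitz.isBounded_preimage hs).measure_lt_top

theorem abs_le_of_lipschitzWith_one_of_support_subset_ball [Nontrivial E]
    {φ : E → ℝ} (hφ : LipschitzWith 1 φ) {x : E} {R : ℝ} (hR : 0 ≤ R)
    (hsupp : Function.support φ ⊆ ball x R) (y : E) : |φ y| ≤ 2 * R := by
  obtain ⟨v, hv⟩ := exists_norm_eq E hR
  have hφv : φ (x + v) = 0 :=
    Function.notMem_support.1 fun h => by simpa [hv] using hsupp h
  by_cases hy : y ∈ ball x R
  · calc |φ y| = dist (φ y) (φ (x + v)) := by rw [hφv, Real.dist_eq, sub_zero]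
      _ ≤ dist y (x + v) := by simpa using hφ.dist_le_mul y (x + v)
      _ ≤ dist y x + dist x (x + v) := dist_triangle _ _ _
      _ ≤ 2 * R := by
        rw [dist_self_add_right, hv]
        linarith [mem_ball.1 hy]
  · rw [Function.notMem_support.1 fun h => hy (hsupp h), abs_zero]
    linarith

theorem le_infDist_compl_ball [Nontrivial E] (x y : E) (R : ℝ) :
    R - dist y x ≤ infDist y (ball x R)ᶜ := by
  obtain ⟨z, hz⟩ := exists_norm_eq E (abs_nonneg R)
  have hne : ((ball x R)ᶜ).Nonempty := ⟨x + z, by simp [hz, le_abs_self]⟩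
  refine (le_infDist hne).2 fun w hw => ?_
  have : R ≤ dist w x := not_lt.1 hw
  linarith [dist_triangle w y x, dist_comm y w]

theorem infDist_le_three_mul_distCutoff [Nontrivial E] {x y : E} {r : ℝ}
    (hx : infDist x S ≤ 2 * r) (hy : y ∈ ball x r) :
    infDist y S ≤ 3 * distCutoff S (ball x (2 * r)) y := by
  have hyx : dist y x < r := mem_ball.1 hy
  have hS : infDist y S ≤ 3 * r := by
    linarith [infDist_le_infDist_add_dist (x := y) (y := x) (s := S)]
  have hU : r ≤ infDist y (ball x (2 * r))ᶜ := by linarith [le_infDist_compl_ball x y (2 * r)]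
  rw [distCutoff, mul_min_of_nonneg _ _ (by norm_num : (0 : ℝ) ≤ 3)]
  exact le_min (by linarith [infDist_nonneg (x := y) (s := S)]) (by linarith)

end NormedSpace

section EuclideanSpace

variable {n : ℕ} [NeZero n]

theorem abs_integral_sub_integral_le_FB {μ ν : Measure (EuclideanSpace ℝ (Fin n))}
    {x : EuclideanSpace ℝ (Fin n)} {R : ℝ} (hR : 0 ≤ R)
    (hμ : μ (ball x R) ≠ ∞) (hν : ν (ball x R) ≠ ∞)
    {φ : EuclideanSpace ℝ (Fin n) → ℝ} (hφ : LipschitzWith 1 φ)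
    (hsupp : Function.support φ ⊆ ball x R) :
    |(∫ y, φ y ∂μ) - (∫ y, φ y ∂ν)| ≤ FB (ball x R) μ ν := by
  have abs_integral_le (ρ : Measure (EuclideanSpace ℝ (Fin n))) (hρ : ρ (ball x R) ≠ ∞)
      {ψ : EuclideanSpace ℝ (Fin n) → ℝ} (hψ : LipschitzWith 1 ψ)
      (hsupp : Function.support ψ ⊆ ball x R) :
      |∫ y, ψ y ∂ρ| ≤ 2 * R * ρ.real (ball x R) := by
    rw [← setIntegral_eq_integral_of_forall_compl_eq_zero fun y hy =>
      Function.notMem_support.1 fun h => hy (hsupp h), ← Real.norm_eq_abs]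
    exact norm_setIntegral_le_of_norm_le_const hρ.lt_top fun y _ => (Real.norm_eq_abs _).trans_le
      (abs_le_of_lipschitzWith_one_of_support_subset_ball hψ hR hsupp y)
  refine le_csSup ⟨2 * R * μ.real (ball x R) + 2 * R * ν.real (ball x R), ?_⟩
    ⟨φ, hφ, hsupp, rfl⟩
  rintro t ⟨ψ, hψ, hψsupp, rfl⟩
  linarith [abs_sub (∫ y, ψ y ∂μ) (∫ y, ψ y ∂ν), abs_integral_le μ hμ hψ hψsupp,
    abs_integral_le ν hν hψ hψsupp]

theorem setIntegral_infDist_le_FB {μ ν : Measure (EuclideanSpace ℝ (Fin n))}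
    [IsLocallyFiniteMeasure μ] {S : Set (EuclideanSpace ℝ (Fin n))}
    {x : EuclideanSpace ℝ (Fin n)} {r : ℝ} (hr : 0 < r)
    (hν : ν (ball x (2 * r)) ≠ ∞) (hνS : ∀ᵐ y ∂ν, y ∈ S)
    (hx : infDist x S ≤ 2 * r) :
    ∫ y in ball x r, infDist y S ∂μ ≤ 3 * FB (ball x (2 * r)) μ ν := by
  set φ := distCutoff S (ball x (2 * r))
  have hφ_int : Integrable φ μ :=
    lipschitzWith_distCutoff.continuous.integrable_of_hasCompactSupport (μ := μ) <|
      HasCompactSupport.intro' (isCompact_closedBall x (2 * r)) isClosed_closedBall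
        fun y hy => Function.notMem_support.1 fun h =>
          hy (ball_subset_closedBall (support_distCutoff_subset h))
  have hφν : ∫ y, φ y ∂ν = 0 :=
    integral_eq_zero_of_ae (hνS.mono fun y hy => distCutoff_eq_zero_of_mem hy)
  have hφFB : ∫ y, φ y ∂μ ≤ FB (ball x (2 * r)) μ ν := by
    have := abs_integral_sub_integral_le_FB (φ := φ) (by positivity)
      (measure_ball_lt_top (μ := μ)).ne hν lipschitzWith_distCutoff support_distCutoff_subset
    rw [hφν, sub_zero] at this
    exact (le_abs_self _).trans this
  calc ∫ y in ball x r, infDist y S ∂μ ≤ ∫ y in ball x r, 3 * φ y ∂μ :=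
        setIntegral_mono_on
          (((continuous_infDist_pt S).continuousOn.integrableOn_compact
            (isCompact_closedBall x r)).mono_set ball_subset_closedBall)
          (hφ_int.const_mul 3).integrableOn measurableSet_ball
          fun y hy => infDist_le_three_mul_distCutoff hx hy
    _ = 3 * ∫ y in ball x r, φ y ∂μ := integral_const_mul _ _
    _ ≤ 3 * FB (ball x (2 * r)) μ ν := by
        gcongr
        exact (setIntegral_le_integral hφ_int (ae_of_all _ distCutoff_nonneg)).trans hφFB

end EuclideanSpace

theorem betaCoef_le {n d : ℕ} (μ : Measure (EuclideanSpace ℝ (Fin n)))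
    (x : EuclideanSpace ℝ (Fin n)) {r : ℝ} (hr : 0 ≤ r)
    {L : AffineSubspace ℝ (EuclideanSpace ℝ (Fin n))} (hL : IsAffineDPlane d L) :
    betaCoef d μ x r ≤
      (1 / r ^ d) *
        ∫ y in ball x r, infDist y (L : Set (EuclideanSpace ℝ (Fin n))) / r ∂μ := by
  refine csInf_le ⟨0, ?_⟩ ⟨L, hL, rfl⟩
  rintro t ⟨L', -, rfl⟩
  have : 0 ≤ ∫ y in ball x r, infDist y (L' : Set (EuclideanSpace ℝ (Fin n))) / r ∂μ :=
    integral_nonneg fun y => div_nonneg infDist_nonneg hr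
  positivity

/-- The `β`-numbers are controlled by the `α`-numbers (via the `F`-distance). -/
theorem statement7 (n d : ℕ) (hd : 1 ≤ d) (hdn : d ≤ n) :
    ∃ C : ℝ, 0 < C ∧
      ∀ (μ : Measure (EuclideanSpace ℝ (Fin n))) [IsLocallyFiniteMeasure μ]
        (x : EuclideanSpace ℝ (Fin n)) (r : ℝ), 0 < r →
        ∀ c : ℝ, 0 ≤ c →
        ∀ (L : AffineSubspace ℝ (EuclideanSpace ℝ (Fin n))), IsAffineDPlane d L →
        infDist x (L : Set (EuclideanSpace ℝ (Fin n))) ≤ 2 * r →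
        (1 / r ^ d) *
            (∫ y in ball x r, infDist y (L : Set (EuclideanSpace ℝ (Fin n))) / r ∂μ) ≤
          C * FB (ball x (2 * r)) μ
              ((ENNReal.ofReal c) •
                (μH[(d:ℝ)]).restrict (L : Set (EuclideanSpace ℝ (Fin n)))) / r ^ (d + 1) ∧
        betaCoef d μ x r ≤
          C * FB (ball x (2 * r)) μ
              ((ENNReal.ofReal c) •
                (μH[(d:ℝ)]).restrict (L : Set (EuclideanSpace ℝ (Fin n)))) / r ^ (d + 1) := by
  refine ⟨3, three_pos, fun μ _ x r hr c _ L hL hxL => ?_⟩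
  have : NeZero n := ⟨by omega⟩
  set ν := (ENNReal.ofReal c) • (μH[(d:ℝ)]).restrict (L : Set (EuclideanSpace ℝ (Fin n)))
  have hν : ν (ball x (2 * r)) ≠ ∞ := by
    rw [Measure.smul_apply, Measure.restrict_apply measurableSet_ball, ← hL.2, smul_eq_mul]
    exact ENNReal.mul_ne_top ENNReal.ofReal_ne_top
      (L.hausdorffMeasure_inter_lt_top isBounded_ball).ne
  have hνL : ∀ᵐ y ∂ν, y ∈ L := Measure.ae_smul_measure
    (ae_restrict_mem L.closed_of_finiteDimensional.measurableSet) _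
  have hmain : (1 / r ^ d) *
      (∫ y in ball x r, infDist y (L : Set (EuclideanSpace ℝ (Fin n))) / r ∂μ) ≤
      3 * FB (ball x (2 * r)) μ ν / r ^ (d + 1) := by
    rw [integral_div, pow_succ', one_div_mul_eq_div, div_div]
    exact div_le_div_of_nonneg_right (setIntegral_infDist_le_FB (μ := μ) hr hν hνL hxL)
      (by positivity)
  exact ⟨hmain, (betaCoef_le μ x hr.le hL).trans hmain⟩

end
end

section
/- In ℝ², let L := ℝ×{0}, h > 0, L′ := ℝ×{h}, 0 < a ≤ 1/2, and μ₁ := (1−a)·H¹|_L + a·H¹|_{L′}. Then for every x ∈ L: (i) α_{μ₁}¹(x,r) = 0 for all 0 < r ≤ h, and (ii) α_{μ₁}¹(x,r) ≤ C·a·h/r for all r > h, where C > 0 is an absolute constant. -/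
open MeasureTheory Metric Set
open scoped ENNReal NNReal

noncomputable section

/-!
For `r ≤ h` the ball `B(x, r)` does not reach the upper line, so inside it `μ₁` *is* the flat
measure `(1 - a)·H¹|_L` and `α = 0`. For `r > h`, compare `μ₁` with `H¹|_L`: a test function `φ`
(1-Lipschitz, supported in the ball) changes by at most `h` between `(t, 0)` and `(t, h)`, and the
two line integrals only see `t` in an interval of length `2r`, so
`|∫φ dμ₁ - ∫φ dH¹|_L| = a·|∫φ(t,h) dt - ∫φ(t,0) dt| ≤ 2arh`. Since `μ₁(B(x,r)) ≥ (1 - a)·2r ≥ r`,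
this gives `α ≤ 2ah/r`.
-/

section Coefficients

variable {n : ℕ}

lemma FB_nonneg (B : Set (EuclideanSpace ℝ (Fin n))) (σ ν : Measure (EuclideanSpace ℝ (Fin n))) :
    0 ≤ FB B σ ν :=
  Real.sSup_nonneg' ⟨0, ⟨fun _ => 0, (LipschitzWith.const 0).weaken zero_le_one, by simp, by simp⟩,
    le_rfl⟩

lemma FB_le {B : Set (EuclideanSpace ℝ (Fin n))} {σ ν : Measure (EuclideanSpace ℝ (Fin n))}
    {C : ℝ} (hC : 0 ≤ C)
    (h : ∀ φ : EuclideanSpace ℝ (Fin n) → ℝ, LipschitzWith 1 φ → Function.support φ ⊆ B →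
      |(∫ y, φ y ∂σ) - ∫ y, φ y ∂ν| ≤ C) :
    FB B σ ν ≤ C :=
  Real.sSup_le (by rintro _ ⟨φ, hφ, hs, rfl⟩; exact h φ hφ hs) hC

variable {d : ℕ} {μ : Measure (EuclideanSpace ℝ (Fin n))} {x : EuclideanSpace ℝ (Fin n)} {r : ℝ}

lemma alphaCoef_nonneg (hr : 0 ≤ r) : 0 ≤ alphaCoef d μ x r :=
  mul_nonneg (by positivity)
    (Real.sInf_nonneg (by rintro _ ⟨c, L, -, -, rfl⟩; exact FB_nonneg _ _ _))

lemma alphaCoef_le_FB_div (hr : 0 ≤ r) {c : ℝ} (hc : 0 ≤ c)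
    {L : AffineSubspace ℝ (EuclideanSpace ℝ (Fin n))} (hL : IsAffineDPlane d L) :
    alphaCoef d μ x r ≤
      FB (ball x r) μ (ENNReal.ofReal c • (μH[(d:ℝ)]).restrict (L : Set (EuclideanSpace ℝ (Fin n))))
        / (r * (μ (ball x r)).toReal) := by
  rw [alphaCoef, one_div_mul_eq_div]
  gcongr
  exact csInf_le ⟨0, by rintro _ ⟨c, L, -, -, rfl⟩; exact FB_nonneg _ _ _⟩ ⟨c, L, hc, hL, rfl⟩

lemma alphaCoef_eq_zero_of_FB_eq_zero (hr : 0 ≤ r) {c : ℝ} (hc : 0 ≤ c)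
    {L : AffineSubspace ℝ (EuclideanSpace ℝ (Fin n))} (hL : IsAffineDPlane d L)
    (h0 : FB (ball x r) μ
      (ENNReal.ofReal c • (μH[(d:ℝ)]).restrict (L : Set (EuclideanSpace ℝ (Fin n)))) = 0) :
    alphaCoef d μ x r = 0 :=
  le_antisymm (by simpa [h0] using alphaCoef_le_FB_div (μ := μ) (x := x) hr hc hL)
    (alphaCoef_nonneg hr)

end Coefficients

lemma Isometry.hausdorffMeasure_restrict_range {X Y : Type*} [EMetricSpace X] [CompleteSpace X]
    [MeasurableSpace X] [BorelSpace X] [EMetricSpace Y] [MeasurableSpace Y] [BorelSpace Y]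
    {f : X → Y} (hf : Isometry f) {d : ℝ} (hd : 0 ≤ d) :
    (μH[d]).restrict (range f) = (μH[d]).map f := by
  ext s hs
  rw [Measure.restrict_apply hs, hf.isClosedEmbedding.measurableEmbedding.map_apply,
    ← image_preimage_eq_inter_range, hf.hausdorffMeasure_image (Or.inl hd)]

lemma hasCompactSupport_of_support_subset_ball {X β : Type*} [MetricSpace X] [ProperSpace X]
    [Zero β] {f : X → β} {x : X} {r : ℝ} (hs : Function.support f ⊆ ball x r) :
    HasCompactSupport f :=
  .of_support_subset_isCompact (isCompact_closedBall x r) (hs.trans ball_subset_closedBall)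

section HorizontalLines

def horizontalLine (c t : ℝ) : EuclideanSpace ℝ (Fin 2) := !₂[t, c]

@[simp] lemma horizontalLine_apply_zero (c t : ℝ) : horizontalLine c t 0 = t := rfl

@[simp] lemma horizontalLine_apply_one (c t : ℝ) : horizontalLine c t 1 = c := rfl

lemma dist_horizontalLine (c t : ℝ) (p : EuclideanSpace ℝ (Fin 2)) :
    dist (horizontalLine c t) p = √((t - p 0) ^ 2 + (c - p 1) ^ 2) := by
  simp [EuclideanSpace.dist_eq, Fin.sum_univ_two, Real.dist_eq, sq_abs]

lemma abs_sub_apply_zero_le_dist_horizontalLine (c t : ℝ) (p : EuclideanSpace ℝ (Fin 2)) :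
    |t - p 0| ≤ dist (horizontalLine c t) p := by
  rw [dist_horizontalLine]
  exact Real.abs_le_sqrt (le_add_of_nonneg_right (sq_nonneg _))

lemma abs_sub_apply_one_le_dist_horizontalLine (c t : ℝ) (p : EuclideanSpace ℝ (Fin 2)) :
    |c - p 1| ≤ dist (horizontalLine c t) p := by
  rw [dist_horizontalLine]
  exact Real.abs_le_sqrt (le_add_of_nonneg_left (sq_nonneg _))

lemma dist_horizontalLine_horizontalLine (c c' t : ℝ) :
    dist (horizontalLine c t) (horizontalLine c' t) = |c - c'| := by
  simp [dist_horizontalLine, Real.sqrt_sq_eq_abs]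

lemma isometry_horizontalLine (c : ℝ) : Isometry (horizontalLine c) :=
  Isometry.of_dist_eq fun t s => by simp [dist_horizontalLine, Real.sqrt_sq_eq_abs, Real.dist_eq]

lemma range_horizontalLine (c : ℝ) : range (horizontalLine c) = {p | p 1 = c} := by
  refine Subset.antisymm (range_subset_iff.2 fun t => rfl) fun p (hp : p 1 = c) => ⟨p 0, ?_⟩
  ext i
  fin_cases i <;> simp [hp]

lemma preimage_ball_horizontalLine_subset (c r : ℝ) (x : EuclideanSpace ℝ (Fin 2)) :
    horizontalLine c ⁻¹' ball x r ⊆ Ioo (x 0 - r) (x 0 + r) := fun t ht =>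
  have := (abs_sub_apply_zero_le_dist_horizontalLine c t x).trans_lt ht
  ⟨by linarith [neg_abs_le (t - x 0)], by linarith [le_abs_self (t - x 0)]⟩

lemma preimage_ball_horizontalLine_of_apply_one_eq {c r : ℝ} {x : EuclideanSpace ℝ (Fin 2)}
    (hx : x 1 = c) : horizontalLine c ⁻¹' ball x r = Ioo (x 0 - r) (x 0 + r) := by
  obtain ⟨t, rfl⟩ : x ∈ range (horizontalLine c) := by rwa [range_horizontalLine]
  rw [(isometry_horizontalLine c).preimage_ball, Real.ball_eq_Ioo, horizontalLine_apply_zero]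

lemma hausdorffMeasure_restrict_horizontal (c : ℝ) :
    (μH[1]).restrict {p : EuclideanSpace ℝ (Fin 2) | p 1 = c} = volume.map (horizontalLine c) := by
  rw [← range_horizontalLine,
    (isometry_horizontalLine c).hausdorffMeasure_restrict_range zero_le_one,
    hausdorffMeasure_real]

lemma hausdorffMeasure_restrict_horizontal_ball_le (c r : ℝ) (x : EuclideanSpace ℝ (Fin 2)) :
    (μH[1]).restrict {p : EuclideanSpace ℝ (Fin 2) | p 1 = c} (ball x r)
      ≤ ENNReal.ofReal (2 * r) := by
  rw [hausdorffMeasure_restrict_horizontal, Measure.map_apply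
    (isometry_horizontalLine c).continuous.measurable measurableSet_ball]
  refine (measure_mono (preimage_ball_horizontalLine_subset c r x)).trans_eq ?_
  rw [Real.volume_Ioo]
  ring_nf

lemma hausdorffMeasure_restrict_horizontal_ball {c r : ℝ} {x : EuclideanSpace ℝ (Fin 2)}
    (hx : x 1 = c) :
    (μH[1]).restrict {p : EuclideanSpace ℝ (Fin 2) | p 1 = c} (ball x r)
      = ENNReal.ofReal (2 * r) := by
  rw [hausdorffMeasure_restrict_horizontal, Measure.map_apply
    (isometry_horizontalLine c).continuous.measurable measurableSet_ball,
    preimage_ball_horizontalLine_of_apply_one_eq hx, Real.volume_Ioo]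
  ring_nf

variable {φ : EuclideanSpace ℝ (Fin 2) → ℝ}

lemma integrable_comp_horizontalLine (hφ : Continuous φ) (hs : HasCompactSupport φ) (c : ℝ) :
    Integrable fun t => φ (horizontalLine c t) :=
  (hφ.comp (isometry_horizontalLine c).continuous).integrable_of_hasCompactSupport
    (hs.comp_isClosedEmbedding (isometry_horizontalLine c).isClosedEmbedding)

lemma integrable_hausdorffMeasure_restrict_horizontal (hφ : Continuous φ)
    (hs : HasCompactSupport φ) (c : ℝ) :
    Integrable φ ((μH[1]).restrict {p : EuclideanSpace ℝ (Fin 2) | p 1 = c}) := by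
  rw [hausdorffMeasure_restrict_horizontal,
    (isometry_horizontalLine c).isClosedEmbedding.measurableEmbedding.integrable_map_iff]
  exact integrable_comp_horizontalLine hφ hs c

lemma integral_smul_hausdorffMeasure_restrict_horizontal {b : ℝ} (hb : 0 ≤ b) (c : ℝ) :
    ∫ y, φ y ∂(ENNReal.ofReal b • (μH[1]).restrict {p : EuclideanSpace ℝ (Fin 2) | p 1 = c})
      = b * ∫ t, φ (horizontalLine c t) := by
  rw [integral_smul_measure, ENNReal.toReal_ofReal hb, hausdorffMeasure_restrict_horizontal,
    (isometry_horizontalLine c).isClosedEmbedding.measurableEmbedding.integral_map, smul_eq_mul]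

lemma abs_integral_horizontalLine_sub_le {x : EuclideanSpace ℝ (Fin 2)} {r : ℝ} (hr : 0 ≤ r)
    (hφ : LipschitzWith 1 φ) (hs : Function.support φ ⊆ ball x r) (c c' : ℝ) :
    |(∫ t, φ (horizontalLine c t)) - ∫ t, φ (horizontalLine c' t)| ≤ 2 * r * |c - c'| := by
  have hcs := hasCompactSupport_of_support_subset_ball hs
  have hvanish (c t : ℝ) (ht : t ∉ Ioo (x 0 - r) (x 0 + r)) : φ (horizontalLine c t) = 0 :=
    by_contra fun hne => ht (preimage_ball_horizontalLine_subset c r x (hs hne))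
  rw [← integral_sub (integrable_comp_horizontalLine hφ.continuous hcs c)
      (integrable_comp_horizontalLine hφ.continuous hcs c'),
    ← setIntegral_eq_integral_of_forall_compl_eq_zero (s := Ioo (x 0 - r) (x 0 + r))
      fun t ht => by rw [hvanish c t ht, hvanish c' t ht, sub_zero], ← Real.norm_eq_abs]
  calc _ ≤ |c - c'| * volume.real (Ioo (x 0 - r) (x 0 + r)) :=
        norm_setIntegral_le_of_norm_le_const measure_Ioo_lt_top fun t _ => by
          simpa [dist_horizontalLine_horizontalLine, Real.dist_eq] using
            hφ.dist_le_mul (horizontalLine c t) (horizontalLine c' t)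
    _ = 2 * r * |c - c'| := by rw [Real.volume_real_Ioo_of_le (by linarith)]; ring

end HorizontalLines

/-- The measure `μ₁` of the statement, for `L = ℝ × {0}` and `L' = ℝ × {h}`. -/
def twoLineMeasure (a h : ℝ) : Measure (EuclideanSpace ℝ (Fin 2)) :=
  ENNReal.ofReal (1 - a) • (μH[(1:ℝ)]).restrict {p : EuclideanSpace ℝ (Fin 2) | p 1 = 0}
    + ENNReal.ofReal a • (μH[(1:ℝ)]).restrict {p : EuclideanSpace ℝ (Fin 2) | p 1 = h}

section TwoLines

variable {a h r : ℝ} {x : EuclideanSpace ℝ (Fin 2)}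

lemma integral_twoLineMeasure (ha0 : 0 ≤ a) (ha1 : a ≤ 1) {φ : EuclideanSpace ℝ (Fin 2) → ℝ}
    (hφ : Continuous φ) (hs : HasCompactSupport φ) :
    ∫ y, φ y ∂twoLineMeasure a h
      = (1 - a) * (∫ t, φ (horizontalLine 0 t)) + a * ∫ t, φ (horizontalLine h t) := by
  have hint (c : ℝ) := integrable_hausdorffMeasure_restrict_horizontal hφ hs c
  rw [twoLineMeasure, integral_add_measure ((hint 0).smul_measure ENNReal.ofReal_ne_top)
      ((hint h).smul_measure ENNReal.ofReal_ne_top),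
    integral_smul_hausdorffMeasure_restrict_horizontal (by linarith),
    integral_smul_hausdorffMeasure_restrict_horizontal ha0]

lemma FB_twoLineMeasure_eq_zero (ha0 : 0 ≤ a) (ha1 : a ≤ 1) (hx : x 1 = 0) (hrh : r ≤ h) :
    FB (ball x r) (twoLineMeasure a h)
      (ENNReal.ofReal (1 - a) • (μH[(1:ℝ)]).restrict {p : EuclideanSpace ℝ (Fin 2) | p 1 = 0})
      = 0 := by
  refine le_antisymm (FB_le le_rfl fun φ hφ hs => ?_) (FB_nonneg _ _ _)
  have hcs := hasCompactSupport_of_support_subset_ball hs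
  have hvanish (t : ℝ) : φ (horizontalLine h t) = 0 := by
    by_contra hne
    have hdist := (abs_sub_apply_one_le_dist_horizontalLine h t x).trans_lt (hs hne)
    rw [hx, sub_zero] at hdist
    linarith [le_abs_self h]
  rw [integral_twoLineMeasure ha0 ha1 hφ.continuous hcs,
    integral_smul_hausdorffMeasure_restrict_horizontal (by linarith)]
  simp [hvanish]

lemma FB_twoLineMeasure_le (ha0 : 0 ≤ a) (ha1 : a ≤ 1) (hh : 0 ≤ h) (hr : 0 ≤ r) :
    FB (ball x r) (twoLineMeasure a h)
      (ENNReal.ofReal 1 • (μH[(1:ℝ)]).restrict {p : EuclideanSpace ℝ (Fin 2) | p 1 = 0})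
      ≤ 2 * a * r * h := by
  refine FB_le (by positivity) fun φ hφ hs => ?_
  have hcs := hasCompactSupport_of_support_subset_ball hs
  rw [integral_twoLineMeasure ha0 ha1 hφ.continuous hcs,
    integral_smul_hausdorffMeasure_restrict_horizontal zero_le_one]
  calc _ = a * |(∫ t, φ (horizontalLine h t)) - ∫ t, φ (horizontalLine 0 t)| := by
        rw [← abs_of_nonneg ha0, ← abs_mul, abs_of_nonneg ha0]
        ring_nf
    _ ≤ a * (2 * r * |h - 0|) := by gcongr; exact abs_integral_horizontalLine_sub_le hr hφ hs h 0
    _ = 2 * a * r * h := by rw [sub_zero, abs_of_nonneg hh]; ring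

lemma le_toReal_twoLineMeasure_ball (ha : a ≤ 1 / 2) (hx : x 1 = 0) (hr : 0 ≤ r) :
    r ≤ (twoLineMeasure a h (ball x r)).toReal := by
  have hL := hausdorffMeasure_restrict_horizontal_ball (r := r) hx
  have hL' := hausdorffMeasure_restrict_horizontal_ball_le h r x
  simp only [twoLineMeasure, Measure.add_apply, Measure.smul_apply, smul_eq_mul, hL] at hL' ⊢
  rw [← ENNReal.ofReal_le_iff_le_toReal (ENNReal.add_ne_top.2 ⟨ENNReal.mul_ne_top
      ENNReal.ofReal_ne_top ENNReal.ofReal_ne_top, ENNReal.mul_ne_top ENNReal.ofReal_ne_top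
      (ne_top_of_le_ne_top ENNReal.ofReal_ne_top hL')⟩), ← ENNReal.ofReal_mul (by linarith)]
  exact (ENNReal.ofReal_le_ofReal (by nlinarith)).trans le_self_add

end TwoLines

def xAxis : AffineSubspace ℝ (EuclideanSpace ℝ (Fin 2)) :=
  (ℝ ∙ EuclideanSpace.single 0 1).toAffineSubspace

lemma coe_xAxis : (xAxis : Set (EuclideanSpace ℝ (Fin 2))) = {p | p 1 = 0} := by
  ext p
  simp only [xAxis, SetLike.mem_coe, Submodule.mem_toAffineSubspace, Submodule.mem_span_singleton]
  constructor
  · rintro ⟨c, rfl⟩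
    simp
  · intro (hp : p 1 = 0)
    refine ⟨p 0, ?_⟩
    ext i
    fin_cases i <;> simp [hp]

lemma isAffineDPlane_xAxis : IsAffineDPlane 1 xAxis :=
  ⟨⟨0, by simp [coe_xAxis]⟩, by
    rw [xAxis, Submodule.toAffineSubspace_direction]
    exact finrank_span_singleton (by simp)⟩

/-- For `μ₁ = (1−a)·H¹|_L + a·H¹|_{L(h)}` with `0 < a ≤ 1/2` and `x ∈ L`:
`α_{μ₁}¹(x,r) = 0` for `0 < r ≤ h`, and `α_{μ₁}¹(x,r) ≤ C·a·h/r` for `r > h`. -/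
theorem statement16 :
    ∃ C : ℝ, 0 < C ∧
      ∀ (h : ℝ), 0 < h → ∀ (a : ℝ), 0 < a → a ≤ 1/2 →
      ∀ (L L' : Set (EuclideanSpace ℝ (Fin 2))),
        L = {p : EuclideanSpace ℝ (Fin 2) | p 1 = 0} →
        L' = {p : EuclideanSpace ℝ (Fin 2) | p 1 = h} →
      ∀ μ₁ : Measure (EuclideanSpace ℝ (Fin 2)),
        μ₁ = ENNReal.ofReal (1 - a) • (μH[(1:ℝ)]).restrict L
            + ENNReal.ofReal a • (μH[(1:ℝ)]).restrict L' →
      ∀ x ∈ L,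
        (∀ r : ℝ, 0 < r → r ≤ h → alphaCoef 1 μ₁ x r = 0) ∧
        (∀ r : ℝ, h < r → alphaCoef 1 μ₁ x r ≤ C * a * h / r) := by
  refine ⟨2, two_pos, fun h hh a ha ha2 L L' hL hL' μ₁ hμ x hx => ?_⟩
  subst hL hL'
  obtain rfl : μ₁ = twoLineMeasure a h := hμ
  have hx1 : x 1 = 0 := hx
  refine ⟨fun r hr hrh => ?_, fun r hrh => ?_⟩
  · refine alphaCoef_eq_zero_of_FB_eq_zero hr.le (c := 1 - a) (by linarith) isAffineDPlane_xAxis ?_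
    rw [coe_xAxis, Nat.cast_one]
    exact FB_twoLineMeasure_eq_zero ha.le (by linarith) hx1 hrh
  · have hr : 0 < r := hh.trans hrh
    calc alphaCoef 1 (twoLineMeasure a h) x r
        ≤ _ / (r * (twoLineMeasure a h (ball x r)).toReal) :=
          alphaCoef_le_FB_div hr.le zero_le_one isAffineDPlane_xAxis
      _ ≤ 2 * a * r * h / (r * r) := by
          rw [coe_xAxis, Nat.cast_one]
          gcongr
          · exact FB_twoLineMeasure_le ha.le (by linarith) hh.le hr.le
          · exact le_toReal_twoLineMeasure_ball ha2 hx1 hr.le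
      _ = 2 * a * h / r := by field_simp
end
end
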